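/- Let x₁ ≥ x₂ ≥ … ≥ x_n ≥ 0 and let ξ₁,…,ξ_n : (0,1) → {x₁,…,x_n} be independent random variables such that ∑_{k=1}^n m({t : ξ_k(t) = x_j}) = 1 for every j = 1,…,n. For t ∈ (0,1) let (η_k(t))_{k=1}^n be the decreasing rearrangement of (ξ_k(t))_{k=1}^n. Then m({t : η_k(t) ≥ x_{4k−3} for all 1 ≤ k ≤ ⌊(n+3)/4⌋}) > 1/10. -/

import Mathlib

open MeasureTheory ProbabilityTheory
open scoped ENNReal

/-- Lebesgue measure on `(0,1)`. -/
noncomputable def P : Measure ℝ := volume.restrict (Set.Ioo 0 1)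

/-- Distribution function of a finite tuple: `d_v(t) = Card {k : v k > t}`. -/
noncomputable def tupleDist {n : ℕ} (v : Fin n → ℝ) (t : ℝ) : ℕ :=
  (Finset.univ.filter fun k => t < v k).card

/-- Decreasing rearrangement of a finite tuple: `μ(k, v)` is the `(k+1)`-th
largest entry. -/
noncomputable def tupleMu {n : ℕ} (v : Fin n → ℝ) (k : ℕ) : ℝ :=
  sInf {l : ℝ | 0 ≤ l ∧ tupleDist v l ≤ k}

/-!
The conclusion fails at `t` only if, for some `k < ⌊(n+3)/4⌋`, at most `k` of the independent
events `{ξ_i ≥ x_{4k}}` occur. The values `x_j` are distinct, because the masses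
`∑_i m{ξ_i = x_j} = 1` add up to `n`; hence these events have total probability at least `4k + 1`,
and the Chernoff bound at parameter `-1` bounds the probability of failure at `k` by
`exp (k - (1 - e⁻¹)(4k + 1)) ≤ 0.57 ⋅ 0.3 ^ k`. Summed over `k`, these bounds stay below `9/10`.
-/

open Real Finset

namespace ProbabilityTheory

variable {Ω ι : Type*} [MeasurableSpace Ω] {μ : Measure Ω}

lemma iIndepFun.iIndepSet_preimage {β : Type*} [MeasurableSpace β] {X : ι → Ω → β}
    (h : iIndepFun X μ) (hX : ∀ i, Measurable (X i)) {S : Set β} (hS : MeasurableSet S) :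
    iIndepSet (fun i => X i ⁻¹' S) μ :=
  (iIndepSet_iff_meas_biInter fun i => hX i hS).2 fun s =>
    h.measure_inter_preimage_eq_mul s fun _ _ => hS

lemma mgf_indicator_one [IsProbabilityMeasure μ] {E : Set Ω} (hE : MeasurableSet E)
    (t : ℝ) : mgf (E.indicator 1) μ t = 1 + (exp t - 1) * μ.real E := by
  have hexp : (fun ω => exp (t * E.indicator 1 ω)) =
      fun ω => 1 + E.indicator (fun _ => exp t - 1) ω := by
    funext ω
    by_cases hω : ω ∈ E <;> simp [hω]
  rw [mgf, hexp, integral_add (integrable_const _) ((integrable_const _).indicator hE),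
    integral_indicator_const _ hE]
  simp [mul_comm]

lemma mgf_indicator_one_le_exp [IsProbabilityMeasure μ] {E : Set Ω}
    (hE : MeasurableSet E) (t : ℝ) : mgf (E.indicator 1) μ t ≤ exp ((exp t - 1) * μ.real E) := by
  rw [mgf_indicator_one hE]
  linarith [add_one_le_exp ((exp t - 1) * μ.real E)]

theorem measureReal_sum_indicator_le_le_exp [Fintype ι] {E : ι → Set Ω}
    (hE : ∀ i, MeasurableSet (E i)) (hind : iIndepSet E μ) {s : ℝ}
    (hs : s ≤ ∑ i, μ.real (E i)) (k : ℝ) :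
    μ.real {ω | ∑ i, (E i).indicator 1 ω ≤ k} ≤ exp (k - (1 - exp (-1)) * s) := by
  have := hind.isProbabilityMeasure
  have hX : iIndepFun (fun i => (E i).indicator (1 : Ω → ℝ)) μ := hind.iIndepFun_indicator
  have hmeas : ∀ i, Measurable ((E i).indicator (1 : Ω → ℝ)) :=
    fun i => measurable_const.indicator (hE i)
  have hint : ∀ i ∈ univ, Integrable (fun ω => exp (-1 * (E i).indicator 1 ω)) μ := by
    refine fun i _ => integrable_exp_mul_of_mem_Icc (a := 0) (b := 1) (hmeas i).aemeasurable
      (ae_of_all _ fun ω => ?_)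
    by_cases hω : ω ∈ E i <;> simp [hω]
  calc μ.real {ω | ∑ i, (E i).indicator 1 ω ≤ k}
      ≤ exp (-(-1) * k) * mgf (∑ i, (E i).indicator 1) μ (-1) := by
        simpa only [Finset.sum_apply] using
          measure_le_le_exp_mul_mgf k (by norm_num) (hX.integrable_exp_mul_sum hmeas hint)
    _ ≤ exp k * ∏ i, exp ((exp (-1) - 1) * μ.real (E i)) := by
        rw [hX.mgf_sum hmeas, neg_neg, one_mul]
        gcongr with i
        · exact fun i _ => mgf_nonneg
        · exact mgf_indicator_one_le_exp (hE i) _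
    _ = exp (k - (1 - exp (-1)) * ∑ i, μ.real (E i)) := by
        rw [← exp_sum, ← exp_add, ← mul_sum]
        ring_nf
    _ ≤ exp (k - (1 - exp (-1)) * s) := by
        gcongr
        linarith [exp_le_one_iff.2 (by norm_num : (-1 : ℝ) ≤ 0)]

end ProbabilityTheory

section Fibers

variable {Ω : Type*} [MeasurableSpace Ω] {μ : Measure Ω} [IsProbabilityMeasure μ] {n : ℕ}

lemma injOn_of_sum_measure_fiber_eq_one {α : Type*} [MeasurableSpace α]
    [MeasurableSingletonClass α] {ξ : Fin n → Ω → α} (hξ : ∀ i, Measurable (ξ i)) {x : ℕ → α}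
    (hval : ∀ i, ∀ᵐ ω ∂μ, ∃ j < n, ξ i ω = x j)
    (hsum : ∀ j < n, ∑ i, μ {ω | ξ i ω = x j} = 1) : Set.InjOn x (range n) := by
  classical
  set V := (range n).image x
  have hfull : ∀ i, μ (ξ i ⁻¹' V) = 1 := fun i =>
    (mem_ae_iff_prob_eq_one (hξ i V.measurableSet)).1 <| by
      filter_upwards [hval i] with ω ⟨j, hj, hω⟩
      simpa [V, hω] using ⟨j, hj, rfl⟩
  have hcard : (V.card : ℝ≥0∞) = n := calc
    (V.card : ℝ≥0∞) = ∑ v ∈ V, ∑ i, μ (ξ i ⁻¹' {v}) := by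
        rw [card_eq_sum_ones, Nat.cast_sum, Nat.cast_one]
        refine sum_congr rfl fun v hv => ?_
        obtain ⟨j, hj, rfl⟩ := mem_image.1 hv
        exact (hsum j (mem_range.1 hj)).symm
    _ = ∑ i, μ (ξ i ⁻¹' V) := by
        rw [sum_comm]
        exact sum_congr rfl fun i _ =>
          sum_measure_preimage_singleton V fun v _ => hξ i (measurableSet_singleton v)
    _ = n := by simp [hfull]
  exact injOn_of_card_image_eq (by rw [card_range]; exact_mod_cast hcard)

lemma add_one_le_sum_measureReal_preimage_Ici {ξ : Fin n → Ω → ℝ} (hξ : ∀ i, Measurable (ξ i))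
    {x : ℕ → ℝ} (hx : ∀ i j : ℕ, i ≤ j → j < n → x j ≤ x i) (hinj : Set.InjOn x (range n))
    (hsum : ∀ j < n, ∑ i, μ {ω | ξ i ω = x j} = 1) {j : ℕ} (hj : j < n) :
    (j + 1 : ℝ) ≤ ∑ i, μ.real (ξ i ⁻¹' Set.Ici (x j)) := by
  have hsub : range (j + 1) ⊆ range n := range_subset_range.2 hj
  have h : ((j + 1 : ℕ) : ℝ≥0∞) ≤ ∑ i, μ (ξ i ⁻¹' Set.Ici (x j)) := calc
    ((j + 1 : ℕ) : ℝ≥0∞) = ∑ l ∈ range (j + 1), ∑ i, μ (ξ i ⁻¹' {x l}) :=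
        (by simp : ((j + 1 : ℕ) : ℝ≥0∞) = ∑ l ∈ range (j + 1), 1).trans
          (sum_congr rfl fun l hl => (hsum l (mem_range.1 (hsub hl))).symm)
    _ = ∑ i, μ (ξ i ⁻¹' ((range (j + 1)).image x)) := by
        rw [sum_comm]
        refine sum_congr rfl fun i _ => ?_
        rw [← sum_measure_preimage_singleton _ fun v _ => hξ i (measurableSet_singleton v),
          sum_image (hinj.mono (by exact_mod_cast hsub))]
    _ ≤ ∑ i, μ (ξ i ⁻¹' Set.Ici (x j)) := by
        gcongr with i
        simp only [coe_image, coe_range, Set.image_subset_iff]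
        intro l hl
        exact hx l j (Nat.lt_succ_iff.1 hl) hj
  simp only [measureReal_def]
  rw [← ENNReal.toReal_sum fun _ _ => measure_ne_top _ _]
  exact_mod_cast ENNReal.toReal_mono (ENNReal.sum_ne_top.2 fun _ _ => measure_ne_top _ _) h

end Fibers

lemma three_fifths_le_one_sub_exp_neg_one : (3 / 5 : ℝ) ≤ 1 - exp (-1) := by
  have h := exp_one_gt_d9
  have : exp (-1) * exp 1 = 1 := by rw [← exp_add]; norm_num
  nlinarith [exp_pos (-1)]

lemma exp_neg_le_inv_quadratic {x : ℝ} (hx : 0 ≤ x) : exp (-x) ≤ (1 + x + x ^ 2 / 2)⁻¹ := by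
  rw [exp_neg]
  exact inv_anti₀ (by positivity) (quadratic_le_exp_of_nonneg hx)

lemma sum_range_exp_sub_mul_four_mul_add_one_lt (m : ℕ) :
    ∑ k ∈ range m, exp (k - (1 - exp (-1)) * (4 * k + 1)) < 9 / 10 := by
  have hterm : ∀ k : ℕ, exp (k - (1 - exp (-1)) * (4 * k + 1)) ≤ 0.57 * 0.3 ^ k := by
    intro k
    have hc := three_fifths_le_one_sub_exp_neg_one
    calc exp (k - (1 - exp (-1)) * (4 * k + 1)) ≤ exp (-(3 / 5) + k * -(7 / 5)) := by
          gcongr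
          nlinarith [(Nat.cast_nonneg k : (0 : ℝ) ≤ k)]
      _ = exp (-(3 / 5)) * exp (-(7 / 5)) ^ k := by rw [exp_add, exp_nat_mul]
      _ ≤ 0.57 * 0.3 ^ k := by
          gcongr
          · exact (exp_neg_le_inv_quadratic (by norm_num)).trans (by norm_num)
          · exact (exp_neg_le_inv_quadratic (by norm_num)).trans (by norm_num)
  calc ∑ k ∈ range m, exp (k - (1 - exp (-1)) * (4 * k + 1))
      ≤ ∑ k ∈ range m, 0.57 * (0.3 : ℝ) ^ k := sum_le_sum fun k _ => hterm k
    _ ≤ 0.57 * (0.3 ^ 0 / (1 - 0.3)) := by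
        rw [← mul_sum, range_eq_Ico]
        gcongr
        exact geom_sum_Ico_le_of_lt_one (by norm_num) (by norm_num)
    _ < 9 / 10 := by norm_num

instance : IsProbabilityMeasure P :=
  ⟨by simp [P, Real.volume_Ioo]⟩

lemma card_filter_le_of_tupleMu_lt {n : ℕ} {v : Fin n → ℝ} {k : ℕ} {c : ℝ}
    (h : tupleMu v k < c) : (univ.filter fun i => c ≤ v i).card ≤ k := by
  set S : Set ℝ := {l | 0 ≤ l ∧ tupleDist v l ≤ k}
  have hne : S.Nonempty := by
    refine ⟨∑ i, |v i|, by positivity, ?_⟩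
    rw [tupleDist, card_eq_zero.2 (filter_eq_empty_iff.2 fun i _ => not_lt.2
      ((le_abs_self _).trans (single_le_sum (fun j _ => abs_nonneg (v j)) (mem_univ i))))]
    exact k.zero_le
  obtain ⟨l, hlS, hlc⟩ := (csInf_lt_iff ⟨0, fun l hl => hl.1⟩ hne).1 h
  refine (card_le_card fun i hi => ?_).trans hlS.2
  simp only [mem_filter] at hi ⊢
  exact ⟨hi.1, hlc.trans_le hi.2⟩

lemma sum_indicator_preimage_Ici_le_of_tupleMu_lt {Ω : Type*} {n : ℕ} {ξ : Fin n → Ω → ℝ}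
    {ω : Ω} {k : ℕ} {c : ℝ} (h : tupleMu (fun i => ξ i ω) k < c) :
    ∑ i, (ξ i ⁻¹' Set.Ici c).indicator (1 : Ω → ℝ) ω ≤ k := by
  classical
  simp only [Set.indicator_apply, Set.mem_preimage, Set.mem_Ici, Pi.one_apply, sum_boole]
  exact_mod_cast card_filter_le_of_tupleMu_lt h

theorem stmt_14_general (n : ℕ) (x : ℕ → ℝ)
    (hxmono : ∀ i j : ℕ, i ≤ j → j < n → x j ≤ x i)
    (ξ : Fin n → ℝ → ℝ) (hmeas : ∀ k, Measurable (ξ k))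
    (hval : ∀ (k : Fin n) (t : ℝ), t ∈ Set.Ioo (0 : ℝ) 1 → ∃ j < n, ξ k t = x j)
    (hindep : iIndepFun (m := fun _ => Real.measurableSpace) ξ P)
    (hdistr : ∀ j < n, ∑ k : Fin n, P {t | ξ k t = x j} = 1) :
    ENNReal.ofReal (1 / 10) <
      P {t | ∀ k : ℕ, k < (n + 3) / 4 → x (4 * k) ≤ tupleMu (fun i => ξ i t) k} := by
  set good := {t | ∀ k : ℕ, k < (n + 3) / 4 → x (4 * k) ≤ tupleMu (fun i => ξ i t) k}
  set bad : ℕ → Set ℝ := fun k =>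
    {t | ∑ i, (ξ i ⁻¹' Set.Ici (x (4 * k))).indicator (1 : ℝ → ℝ) t ≤ k}
  have hinj : Set.InjOn x (range n) := injOn_of_sum_measure_fiber_eq_one (μ := P) hmeas
    (fun i => ae_restrict_of_forall_mem measurableSet_Ioo (hval i)) hdistr
  have hbad : goodᶜ ⊆ ⋃ k ∈ range ((n + 3) / 4), bad k := fun t ht => by
    obtain ⟨k, hk, hlt⟩ := by simpa [good] using ht
    exact Set.mem_biUnion (mem_range.2 hk) (sum_indicator_preimage_Ici_le_of_tupleMu_lt hlt)
  have hbad_le : ∀ k ∈ range ((n + 3) / 4), P.real (bad k) ≤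
      exp (k - (1 - exp (-1)) * (4 * k + 1)) := fun k hk => by
    have h4k : 4 * k < n := by have := mem_range.1 hk; omega
    refine measureReal_sum_indicator_le_le_exp (fun i => hmeas i measurableSet_Ici)
      (hindep.iIndepSet_preimage hmeas measurableSet_Ici) ?_ k
    exact_mod_cast add_one_le_sum_measureReal_preimage_Ici hmeas hxmono hinj hdistr h4k
  have hbad_lt : P.real goodᶜ < 9 / 10 := calc
    P.real goodᶜ ≤ ∑ k ∈ range ((n + 3) / 4), P.real (bad k) :=
        (measureReal_mono hbad (measure_ne_top _ _)).trans (measureReal_biUnion_finset_le _ _)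
    _ ≤ ∑ k ∈ range ((n + 3) / 4), exp (k - (1 - exp (-1)) * (4 * k + 1)) := sum_le_sum hbad_le
    _ < 9 / 10 := sum_range_exp_sub_mul_four_mul_add_one_lt _
  have hsplit : 1 ≤ P.real good + P.real goodᶜ := by
    simpa using measureReal_union_le (μ := P) good goodᶜ
  rw [← ofReal_measureReal]
  exact ENNReal.ofReal_lt_ofReal_iff'.2 ⟨by linarith, by linarith⟩

/-- let `x 0 ≥ x 1 ≥ … ≥ x (n-1) ≥ 0` (written here `0`-based) and
let `ξ_1,…,ξ_n` be independent random variables on `(0,1)` with values in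
`{x 0,…,x (n-1)}` such that `∑_k m{ξ_k = x j} = 1` for every `j < n`.  If
`η(t)` denotes the decreasing rearrangement of `(ξ_k(t))_k`, then
`m{t : η_k(t) ≥ x_{4k-3} for all 1 ≤ k ≤ ⌊(n+3)/4⌋} > 1/10` (in `0`-based
indexing: `tupleMu (ξ·t) k ≥ x (4k)` for all `k < ⌊(n+3)/4⌋`). -/
theorem stmt_14 (n : ℕ) (hn : 0 < n) (x : ℕ → ℝ)
    (hxpos : ∀ j < n, 0 ≤ x j)
    (hxmono : ∀ i j : ℕ, i ≤ j → j < n → x j ≤ x i)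
    (ξ : Fin n → ℝ → ℝ) (hmeas : ∀ k, Measurable (ξ k))
    (hval : ∀ (k : Fin n) (t : ℝ), t ∈ Set.Ioo (0 : ℝ) 1 → ∃ j < n, ξ k t = x j)
    (hindep : iIndepFun (m := fun _ => Real.measurableSpace) ξ P)
    (hdistr : ∀ j < n, ∑ k : Fin n, P {t | ξ k t = x j} = 1) :
    ENNReal.ofReal (1 / 10) <
      P {t | ∀ k : ℕ, k < (n + 3) / 4 → x (4 * k) ≤ tupleMu (fun i => ξ i t) k} :=
  stmt_14_general n x hxmono ξ hmeas hval hindep hdistr
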